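/- arXiv:math/0604289 — 3 statements merged into one kernel-verified Lean document; each statement's English description precedes it below -/
import Mathlib

section
/- Let m = n = 1 and let f : L → F be a function on the lattice L = {(x,y,t) ∈ ℤ³ : 0 ≤ x ≤ 1, 0 ≤ y ≤ 1, x+y+t even} with values in a semifield F, satisfying the corner rules of the bounded octahedron recurrence: f(0,0,t+1) = f(1,0,t)·f(0,1,t)/f(0,0,t−1), f(0,1,t+1) = f(1,1,t)·f(0,0,t)/f(0,1,t−1), f(1,0,t+1) = f(1,1,t)·f(0,0,t)/f(1,0,t−1), f(1,1,t+1) = f(0,1,t)·f(1,0,t)/f(1,1,t−1) (for appropriate parities of t). Then there exists a constant c ∈ F such that f(x,y,t) = c · f(1−x, 1−y, t−2) for all (x,y,t) ∈ L. -/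
/-! For each column `x ∈ {0, 1}` and time `t` exactly one lattice point `(x, y, t)` exists, so `f`
reduces to two sequences `u = column f 0`, `v = column f 1` with
`u (t+1) u (t-1) = u t v t = v (t+1) v (t-1)`. Multiplying the recurrence for `u` at `t` with the
one for `v` at `t - 1` shows that `u t / v (t-2)` does not depend on `t`; and since both
`u t u (t-2)` and `v t v (t-2)` equal `u (t-1) v (t-1)`, the same constant relates `v t` to
`u (t-2)`. -/

/-- A semifield in the sense of the paper: a commutative group under
multiplication, together with a commutative associative addition over
which multiplication distributes (no zero element). -/
class OctSemifield (F : Type*) extends CommGroup F, Add F where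
  add_comm : ∀ a b : F, a + b = b + a
  add_assoc : ∀ a b c : F, a + b + c = a + (b + c)
  mul_add : ∀ a b c : F, a * (b + c) = a * b + a * c

section PairRecurrence

variable {G : Type*} [CommGroup G] {u v : ℤ → G}

theorem periodic_div_of_pair_recurrence
    (hu : ∀ t, u (t + 1) * u (t - 1) = u t * v t)
    (hv : ∀ t, v (t + 1) * v (t - 1) = u t * v t) :
    Function.Periodic (fun t => u t / v (t - 2)) 1 := by
  intro t
  have hv' : v t * v (t - 2) = u (t - 1) * v (t - 1) := by
    simpa [sub_sub] using hv (t - 1)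
  have key : u (t + 1) * v (t - 2) * (u (t - 1) * v t) = u t * v (t - 1) * (u (t - 1) * v t) :=
    calc _ = u (t + 1) * u (t - 1) * (v t * v (t - 2)) := by ac_rfl
      _ = u t * v t * (u (t - 1) * v (t - 1)) := by rw [hu, hv']
      _ = _ := by ac_rfl
  simpa [show t + 1 - 2 = t - 1 by ring, div_eq_div_iff_mul_eq_mul] using mul_right_cancel key

theorem exists_eq_mul_swap_of_pair_recurrence
    (hu : ∀ t, u (t + 1) * u (t - 1) = u t * v t)
    (hv : ∀ t, v (t + 1) * v (t - 1) = u t * v t) :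
    ∃ c, ∀ t, u t = c * v (t - 2) ∧ v t = c * u (t - 2) := by
  refine ⟨u 0 / v (0 - 2), fun t => ?_⟩
  have hut : u t = u 0 / v (0 - 2) * v (t - 2) := by
    rw [← (periodic_div_of_pair_recurrence hu hv).int_mul_eq t, mul_one, Int.cast_id,
      div_mul_cancel]
  refine ⟨hut, mul_right_cancel (b := v (t - 2)) ?_⟩
  calc v t * v (t - 2) = u t * u (t - 2) := by
        simpa [sub_sub] using ((hv (t - 1)).trans (hu (t - 1)).symm)
    _ = _ := by rw [hut]; ac_rfl

end PairRecurrence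

section Column

variable {F : Type*} (f : ℤ → ℤ → ℤ → F)

def column (x t : ℤ) : F := if Even (x + t) then f x 0 t else f x 1 t

theorem column_eq {x y t : ℤ} (hy0 : 0 ≤ y) (hy1 : y ≤ 1) (hpar : Even (x + y + t)) :
    column f x t = f x y t := by
  interval_cases y
  · simp_all [column]
  · simp_all [column, add_right_comm x 1]

variable {f} {t : ℤ}

theorem column_of_even (ht : Even t) : column f 0 t = f 0 0 t ∧ column f 1 t = f 1 1 t := by
  simp [column, ht, Int.even_add]

theorem column_of_odd (ht : Odd t) : column f 0 t = f 0 1 t ∧ column f 1 t = f 1 0 t := by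
  simp [column, ht]

variable [CommGroup F]
variable (h00 : ∀ t : ℤ, Odd t → f 0 0 (t + 1) = f 1 0 t * f 0 1 t / f 0 0 (t - 1))
    (h01 : ∀ t : ℤ, Even t → f 0 1 (t + 1) = f 1 1 t * f 0 0 t / f 0 1 (t - 1))
    (h10 : ∀ t : ℤ, Even t → f 1 0 (t + 1) = f 1 1 t * f 0 0 t / f 1 0 (t - 1))
    (h11 : ∀ t : ℤ, Odd t → f 1 1 (t + 1) = f 0 1 t * f 1 0 t / f 1 1 (t - 1))

include h00 h01 in
theorem column_zero_recurrence (t : ℤ) :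
    column f 0 (t + 1) * column f 0 (t - 1) = column f 0 t * column f 1 t := by
  rcases Int.even_or_odd t with ht | ht
  · rw [(column_of_odd ht.add_one).1, (column_of_odd (ht.sub_odd odd_one)).1,
      (column_of_even ht).1, (column_of_even ht).2, h01 t ht, div_mul_cancel, mul_comm]
  · rw [(column_of_even ht.add_one).1, (column_of_even (ht.sub_odd odd_one)).1,
      (column_of_odd ht).1, (column_of_odd ht).2, h00 t ht, div_mul_cancel, mul_comm]

include h10 h11 in
theorem column_one_recurrence (t : ℤ) :
    column f 1 (t + 1) * column f 1 (t - 1) = column f 0 t * column f 1 t := by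
  rcases Int.even_or_odd t with ht | ht
  · rw [(column_of_odd ht.add_one).2, (column_of_odd (ht.sub_odd odd_one)).2,
      (column_of_even ht).1, (column_of_even ht).2, h10 t ht, div_mul_cancel, mul_comm]
  · rw [(column_of_even ht.add_one).2, (column_of_even (ht.sub_odd odd_one)).2,
      (column_of_odd ht).1, (column_of_odd ht).2, h11 t ht, div_mul_cancel]

end Column

/-- Periodicity of the bounded octahedron recurrence in the case m = n = 1. -/
theorem periodicity_m_eq_n_eq_one {F : Type*} [OctSemifield F]
    (f : ℤ → ℤ → ℤ → F)
    (h00 : ∀ t : ℤ, Odd t → f 0 0 (t + 1) = f 1 0 t * f 0 1 t / f 0 0 (t - 1))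
    (h01 : ∀ t : ℤ, Even t → f 0 1 (t + 1) = f 1 1 t * f 0 0 t / f 0 1 (t - 1))
    (h10 : ∀ t : ℤ, Even t → f 1 0 (t + 1) = f 1 1 t * f 0 0 t / f 1 0 (t - 1))
    (h11 : ∀ t : ℤ, Odd t → f 1 1 (t + 1) = f 0 1 t * f 1 0 t / f 1 1 (t - 1)) :
    ∃ c : F, ∀ x y t : ℤ, 0 ≤ x → x ≤ 1 → 0 ≤ y → y ≤ 1 → Even (x + y + t) →
      f x y t = c * f (1 - x) (1 - y) (t - 2) := by
  obtain ⟨c, hc⟩ := exists_eq_mul_swap_of_pair_recurrence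
    (column_zero_recurrence h00 h01) (column_one_recurrence h10 h11)
  refine ⟨c, fun x y t hx0 hx1 hy0 hy1 hpar => ?_⟩
  have hpar' : Even (1 - x + (1 - y) + (t - 2)) := by
    rw [show 1 - x + (1 - y) + (t - 2) = x + y + t - 2 * (x + y) by ring]
    exact hpar.sub (even_two_mul _)
  rw [← column_eq f hy0 hy1 hpar, ← column_eq f (by omega) (by omega) hpar']
  interval_cases x
  · simpa using (hc t).1
  · simpa using (hc t).2
end

section
/- Let F be a semifield and let f : (ℤ/(2m+2n)) × ℤ → F satisfy f(s, t+1)·f(s, t−1) = f(s+1, t)·f(s−1, t) for all s, t. Define, for a 'path' γ given by a function h : ℤ/(2m+2n) → ℤ with |h(s+1) − h(s)| = 1 and h(s) ≡ s (mod 2), the quantity c(γ) = ∏_{s: h local max at s} f(s, h(s)) · ∏_{s: h local min at s} f(s, h(s))⁻¹. Then c(γ) is independent of the choice of such h. -/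
section Aux
variable {F : Type*} [OctSemifield F] {N : ℕ} [NeZero N]

private theorem grpL1 {G : Type*} [CommGroup G] (A B C D : G) (k : A * B = C * D) :
    A = D * (B⁻¹ * C) := by
  rw [← mul_assoc, mul_right_comm, ← mul_comm C D, ← k, mul_inv_cancel_right]

private theorem grpL2 {G : Type*} [CommGroup G] (A B C D : G) (k : A * B = C * D) :
    D⁻¹ * A = B⁻¹ * C := by
  rw [inv_mul_eq_iff_eq_mul, ← mul_assoc, mul_comm D B⁻¹, mul_assoc, mul_comm D C, ← k,
    mul_comm A B, inv_mul_cancel_left]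

private theorem grpL3 {G : Type*} [CommGroup G] (A B C D : G) (k : A * B = C * D) :
    A * C⁻¹ = D * B⁻¹ := by
  rw [mul_inv_eq_iff_eq_mul, mul_assoc, mul_comm B⁻¹ C, ← mul_assoc, mul_comm D C, ← k,
    mul_inv_cancel_right]

private theorem grpL4 {G : Type*} [CommGroup G] (A B C D : G) (k : A * B = C * D) :
    D⁻¹ * (A * C⁻¹) = B⁻¹ := by
  rw [← mul_assoc, mul_inv_eq_iff_eq_mul, inv_mul_eq_iff_eq_mul, ← mul_assoc, mul_comm D B⁻¹,
    mul_assoc, mul_comm D C, ← k, mul_comm A B, inv_mul_cancel_left]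

def pg (f : ZMod N → ℤ → F) (h : ZMod N → ℤ) (x : ZMod N) : F :=
  if h (x - 1) < h x ∧ h (x + 1) < h x then f x (h x)
  else if h x < h (x - 1) ∧ h x < h (x + 1) then (f x (h x))⁻¹ else 1

lemma prod_range_zmod (g : ZMod N → F) :
    ∏ i ∈ Finset.range N, g (i : ZMod N) = ∏ x : ZMod N, g x := by
  refine Finset.prod_bij' (fun i _ => (i : ZMod N)) (fun x _ => x.val)
    (fun a ha => Finset.mem_univ _) (fun x _ => Finset.mem_range.2 (ZMod.val_lt x))
    (fun a ha => ?_) (fun x _ => ZMod.natCast_rightInverse x) (fun a ha => rfl)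
  exact ZMod.val_cast_of_lt (Finset.mem_range.1 ha)

lemma flipProd (hN : 4 ≤ N) (f : ZMod N → ℤ → F)
    (hf : ∀ s t, f s (t + 1) * f s (t - 1) = f (s + 1) t * f (s - 1) t)
    (h : ZMod N → ℤ)
    (hstep : ∀ s, h (s + 1) - h s = 1 ∨ h (s + 1) - h s = -1)
    (s : ZMod N) (e1 : h (s - 1) = h s + 1) (e2 : h (s + 1) = h s + 1) :
    (∏ x : ZMod N, pg f (Function.update h s (h s + 2)) x) = ∏ x : ZMod N, pg f h x := by
  have o1 : (1 : ZMod N) ≠ 0 := by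
    intro e
    rw [show (1 : ZMod N) = ((1 : ℕ) : ZMod N) by norm_num,
      ZMod.natCast_eq_zero_iff] at e
    exact absurd (Nat.le_of_dvd one_pos e) (by omega)
  have o2 : (2 : ZMod N) ≠ 0 := by
    intro e
    rw [show (2 : ZMod N) = ((2 : ℕ) : ZMod N) by norm_num,
      ZMod.natCast_eq_zero_iff] at e
    exact absurd (Nat.le_of_dvd two_pos e) (by omega)
  have dm1 : s - 1 ≠ s := fun e => o1 (sub_eq_self.mp e)
  have dp1 : s + 1 ≠ s := fun e => o1 (by simpa using sub_eq_zero.mpr e)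
  have dmp : s - 1 ≠ s + 1 := fun e => o2 (by linear_combination -e)
  have dm2 : s - 2 ≠ s := fun e => o2 (by linear_combination -e)
  have dp2 : s + 2 ≠ s := fun e => o2 (by linear_combination e)
  set v := h s with hv
  have hv2 : Function.update h s (v + 2) s = v + 2 := Function.update_self _ _ _
  have hm1 : Function.update h s (v + 2) (s - 1) = v + 1 := by
    rw [Function.update_of_ne dm1, e1]
  have hp1 : Function.update h s (v + 2) (s + 1) = v + 1 := by
    rw [Function.update_of_ne dp1, e2]
  have hm2 : Function.update h s (v + 2) (s - 2) = h (s - 2) := Function.update_of_ne dm2 _ _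
  have hp2 : Function.update h s (v + 2) (s + 2) = h (s + 2) := Function.update_of_ne dp2 _ _
  have cm : h (s - 2) = v ∨ h (s - 2) = v + 2 := by
    have := hstep (s - 2)
    rw [show s - 2 + 1 = s - 1 by ring, e1] at this
    omega
  have cp : h (s + 2) = v ∨ h (s + 2) = v + 2 := by
    have := hstep (s + 1)
    rw [show s + 1 + 1 = s + 2 by ring, e2] at this
    omega
  have key : f s (v + 2) * f s v = f (s + 1) (v + 1) * f (s - 1) (v + 1) := by
    have := hf s (v + 1)
    rw [show v + 1 + 1 = v + 2 by ring, show v + 1 - 1 = v by ring] at this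
    exact this
  set T : Finset (ZMod N) := {s - 1, s, s + 1} with hT
  have split : ∀ hh : ZMod N → ℤ,
      (∏ x : ZMod N, pg f hh x) = (∏ x ∈ Tᶜ, pg f hh x) * ∏ x ∈ T, pg f hh x :=
    fun hh => (Finset.prod_compl_mul_prod T _).symm
  rw [split, split]
  congr 1
  · refine Finset.prod_congr rfl fun x hx => ?_
    simp only [hT, Finset.mem_compl, Finset.mem_insert, Finset.mem_singleton, not_or] at hx
    obtain ⟨hx1, hx2, hx3⟩ := hx
    have a1 : x - 1 ≠ s := fun e => hx3 (by linear_combination e)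
    have a2 : x ≠ s := hx2
    have a3 : x + 1 ≠ s := fun e => hx1 (by linear_combination e)
    simp only [pg, Function.update_of_ne a1, Function.update_of_ne a2, Function.update_of_ne a3]
  · have hnm : s - 1 ∉ ({s, s + 1} : Finset (ZMod N)) := by
      simp only [Finset.mem_insert, Finset.mem_singleton]
      exact not_or.mpr ⟨dm1, dmp⟩
    have hnm2 : s ∉ ({s + 1} : Finset (ZMod N)) := by
      simp only [Finset.mem_singleton]
      exact fun e => dp1 e.symm
    rw [hT, Finset.prod_insert hnm, Finset.prod_insert hnm2, Finset.prod_singleton,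
      Finset.prod_insert hnm, Finset.prod_insert hnm2, Finset.prod_singleton]
    have E2 : pg f (Function.update h s (v + 2)) s = f s (v + 2) := by
      simp only [pg]
      rw [hm1, hp1, hv2, if_pos (by omega)]
    have E2' : pg f h s = (f s v)⁻¹ := by
      simp only [pg]
      rw [e1, e2, ← hv, if_neg (by omega), if_pos (by omega)]
    rcases cm with cm | cm <;> rcases cp with cp | cp
    · have E1 : pg f (Function.update h s (v + 2)) (s - 1) = 1 := by
        simp only [pg]
        rw [show s - 1 - 1 = s - 2 by ring, show s - 1 + 1 = s by ring, hm2, hm1, hv2, cm,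
          if_neg (by omega), if_neg (by omega)]
      have E3 : pg f (Function.update h s (v + 2)) (s + 1) = 1 := by
        simp only [pg]
        rw [show s + 1 + 1 = s + 2 by ring, show s + 1 - 1 = s by ring, hp2, hp1, hv2, cp,
          if_neg (by omega), if_neg (by omega)]
      have E1' : pg f h (s - 1) = f (s - 1) (v + 1) := by
        simp only [pg]
        rw [show s - 1 - 1 = s - 2 by ring, show s - 1 + 1 = s by ring, cm, e1, ← hv,
          if_pos (by omega)]
      have E3' : pg f h (s + 1) = f (s + 1) (v + 1) := by
        simp only [pg]
        rw [show s + 1 + 1 = s + 2 by ring, show s + 1 - 1 = s by ring, cp, e2, ← hv,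
          if_pos (by omega)]
      rw [E1, E2, E3, E1', E2', E3', one_mul, mul_one]
      exact grpL1 _ _ _ _ key
    · have E1 : pg f (Function.update h s (v + 2)) (s - 1) = 1 := by
        simp only [pg]
        rw [show s - 1 - 1 = s - 2 by ring, show s - 1 + 1 = s by ring, hm2, hm1, hv2, cm,
          if_neg (by omega), if_neg (by omega)]
      have E3 : pg f (Function.update h s (v + 2)) (s + 1) = (f (s + 1) (v + 1))⁻¹ := by
        simp only [pg]
        rw [show s + 1 + 1 = s + 2 by ring, show s + 1 - 1 = s by ring, hp2, hp1, hv2, cp,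
          if_neg (by omega), if_pos (by omega)]
      have E1' : pg f h (s - 1) = f (s - 1) (v + 1) := by
        simp only [pg]
        rw [show s - 1 - 1 = s - 2 by ring, show s - 1 + 1 = s by ring, cm, e1, ← hv,
          if_pos (by omega)]
      have E3' : pg f h (s + 1) = 1 := by
        simp only [pg]
        rw [show s + 1 + 1 = s + 2 by ring, show s + 1 - 1 = s by ring, cp, e2, ← hv,
          if_neg (by omega), if_neg (by omega)]
      rw [E1, E2, E3, E1', E2', E3', one_mul, mul_one]
      exact grpL3 _ _ _ _ key
    · have E1 : pg f (Function.update h s (v + 2)) (s - 1) = (f (s - 1) (v + 1))⁻¹ := by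
        simp only [pg]
        rw [show s - 1 - 1 = s - 2 by ring, show s - 1 + 1 = s by ring, hm2, hm1, hv2, cm,
          if_neg (by omega), if_pos (by omega)]
      have E3 : pg f (Function.update h s (v + 2)) (s + 1) = 1 := by
        simp only [pg]
        rw [show s + 1 + 1 = s + 2 by ring, show s + 1 - 1 = s by ring, hp2, hp1, hv2, cp,
          if_neg (by omega), if_neg (by omega)]
      have E1' : pg f h (s - 1) = 1 := by
        simp only [pg]
        rw [show s - 1 - 1 = s - 2 by ring, show s - 1 + 1 = s by ring, cm, e1, ← hv,
          if_neg (by omega), if_neg (by omega)]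
      have E3' : pg f h (s + 1) = f (s + 1) (v + 1) := by
        simp only [pg]
        rw [show s + 1 + 1 = s + 2 by ring, show s + 1 - 1 = s by ring, cp, e2, ← hv,
          if_pos (by omega)]
      rw [E1, E2, E3, E1', E2', E3', one_mul, mul_one]
      exact grpL2 _ _ _ _ key
    · have E1 : pg f (Function.update h s (v + 2)) (s - 1) = (f (s - 1) (v + 1))⁻¹ := by
        simp only [pg]
        rw [show s - 1 - 1 = s - 2 by ring, show s - 1 + 1 = s by ring, hm2, hm1, hv2, cm,
          if_neg (by omega), if_pos (by omega)]
      have E3 : pg f (Function.update h s (v + 2)) (s + 1) = (f (s + 1) (v + 1))⁻¹ := by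
        simp only [pg]
        rw [show s + 1 + 1 = s + 2 by ring, show s + 1 - 1 = s by ring, hp2, hp1, hv2, cp,
          if_neg (by omega), if_pos (by omega)]
      have E1' : pg f h (s - 1) = 1 := by
        simp only [pg]
        rw [show s - 1 - 1 = s - 2 by ring, show s - 1 + 1 = s by ring, cm, e1, ← hv,
          if_neg (by omega), if_neg (by omega)]
      have E3' : pg f h (s + 1) = 1 := by
        simp only [pg]
        rw [show s + 1 + 1 = s + 2 by ring, show s + 1 - 1 = s by ring, cp, e2, ← hv,
          if_neg (by omega), if_neg (by omega)]
      rw [E1, E2, E3, E1', E2', E3', one_mul, mul_one]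
      exact grpL4 _ _ _ _ key

lemma reduce (hN : 4 ≤ N) (f : ZMod N → ℤ → F)
    (hf : ∀ s t, f s (t + 1) * f s (t - 1) = f (s + 1) t * f (s - 1) t)
    (h h' : ZMod N → ℤ)
    (s1 : ∀ s, h (s + 1) - h s = 1 ∨ h (s + 1) - h s = -1)
    (s2 : ∀ s, h' (s + 1) - h' s = 1 ∨ h' (s + 1) - h' s = -1)
    (pe : ∀ x, Even (h' x - h x))
    (x0 : ZMod N) (hx0 : h x0 < h' x0) :
    ∃ h₂ : ZMod N → ℤ,
      (∀ s, h₂ (s + 1) - h₂ s = 1 ∨ h₂ (s + 1) - h₂ s = -1) ∧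
      (∀ x, Even (h' x - h₂ x)) ∧
      (∑ x : ZMod N, (h' x - h₂ x).natAbs) + 2 = (∑ x : ZMod N, (h' x - h x).natAbs) ∧
      (∏ x : ZMod N, pg f h₂ x) = ∏ x : ZMod N, pg f h x := by
  have o1 : (1 : ZMod N) ≠ 0 := by
    intro e
    rw [show (1 : ZMod N) = ((1 : ℕ) : ZMod N) by norm_num,
      ZMod.natCast_eq_zero_iff] at e
    exact absurd (Nat.le_of_dvd one_pos e) (by omega)
  obtain ⟨s, hsT, hmin⟩ := Finset.exists_min_image
    (Finset.univ.filter fun x => h x < h' x) h ⟨x0, by simp [hx0]⟩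
  have hs : h s < h' s := (Finset.mem_filter.1 hsT).2
  have e2 : h (s + 1) = h s + 1 := by
    rcases s1 s with d | d
    · omega
    · exfalso
      have hb : h' s - 1 ≤ h' (s + 1) := by have := s2 s; omega
      have mem : s + 1 ∈ Finset.univ.filter fun x => h x < h' x := by
        simp only [Finset.mem_filter, Finset.mem_univ, true_and]
        omega
      have := hmin (s + 1) mem
      omega
  have e1 : h (s - 1) = h s + 1 := by
    have d := s1 (s - 1)
    rw [show s - 1 + 1 = s by ring] at d
    rcases d with d | d
    · exfalso
      have d2 := s2 (s - 1)
      rw [show s - 1 + 1 = s by ring] at d2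
      have mem : s - 1 ∈ Finset.univ.filter fun x => h x < h' x := by
        simp only [Finset.mem_filter, Finset.mem_univ, true_and]
        omega
      have := hmin (s - 1) mem
      omega
    · omega
  have dp1 : s + 1 ≠ s := fun e => o1 (by simpa using sub_eq_zero.mpr e)
  have epar : h s + 2 ≤ h' s := by
    obtain ⟨r, hr⟩ := pe s
    omega
  refine ⟨Function.update h s (h s + 2), ?_, ?_, ?_, flipProd hN f hf h s1 s e1 e2⟩
  · intro x
    rcases eq_or_ne x s with rfl | hxs
    · rw [Function.update_self, Function.update_of_ne dp1, e2]
      omega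
    · rcases eq_or_ne (x + 1) s with hx1 | hx1
      · have hxv : x = s - 1 := by linear_combination hx1
        rw [hx1, Function.update_self, Function.update_of_ne hxs, hxv, e1]
        omega
      · rw [Function.update_of_ne hx1, Function.update_of_ne hxs]
        exact s1 x
  · intro x
    rcases eq_or_ne x s with rfl | hxs
    · rw [Function.update_self]
      obtain ⟨r, hr⟩ := pe x
      exact ⟨r - 1, by omega⟩
    · rw [Function.update_of_ne hxs]
      exact pe x
  · have congrsum : (∑ x : ZMod N, (h' x - Function.update h s (h s + 2) x).natAbs)
        = ∑ x : ZMod N, Function.update (fun x => (h' x - h x).natAbs) s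
            ((h' s - h s).natAbs - 2) x := by
      refine Finset.sum_congr rfl fun x _ => ?_
      rcases eq_or_ne x s with rfl | hxs
      · rw [Function.update_self, Function.update_self]
        omega
      · rw [Function.update_of_ne hxs, Function.update_of_ne hxs]
    rw [congrsum, Finset.sum_update_of_mem (Finset.mem_univ s),
      ← Finset.add_sum_erase _ _ (Finset.mem_univ s), Finset.erase_eq]
    have h2 : 2 ≤ (h' s - h s).natAbs := by omega
    omega

lemma mainLemma (hN : 4 ≤ N) (f : ZMod N → ℤ → F)
    (hf : ∀ s t, f s (t + 1) * f s (t - 1) = f (s + 1) t * f (s - 1) t) :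
    ∀ k : ℕ, ∀ h h' : ZMod N → ℤ,
      (∀ s, h (s + 1) - h s = 1 ∨ h (s + 1) - h s = -1) →
      (∀ s, h' (s + 1) - h' s = 1 ∨ h' (s + 1) - h' s = -1) →
      (∀ x, Even (h' x - h x)) →
      (∑ x : ZMod N, (h' x - h x).natAbs) = k →
      (∏ x : ZMod N, pg f h x) = ∏ x : ZMod N, pg f h' x := by
  intro k
  induction k using Nat.strong_induction_on with
  | _ k IH =>
    intro h h' s1 s2 pe mk
    by_cases he : ∀ x, h x = h' x
    · rw [funext he]
    · push_neg at he
      obtain ⟨x0, hx0⟩ := he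
      rcases lt_or_gt_of_ne hx0 with hlt | hgt
      · obtain ⟨h₂, t1, t2, t3, t4⟩ := reduce hN f hf h h' s1 s2 pe x0 hlt
        have hlt2 : (∑ x : ZMod N, (h' x - h₂ x).natAbs) < k := by omega
        rw [← t4]
        exact IH _ hlt2 h₂ h' t1 s2 t2 rfl
      · have pe' : ∀ x, Even (h x - h' x) := fun x => by
          simpa [neg_sub] using (pe x).neg
        obtain ⟨h₂, t1, t2, t3, t4⟩ := reduce hN f hf h' h s2 s1 pe' x0 hgt
        have symm1 : ∀ a b : ZMod N → ℤ,
            (∑ x : ZMod N, (a x - b x).natAbs) = ∑ x : ZMod N, (b x - a x).natAbs :=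
          fun a b => Finset.sum_congr rfl fun x _ => by rw [← Int.natAbs_neg, neg_sub]
        have A := symm1 h h'
        have B := symm1 h₂ h
        have hlt2 : (∑ x : ZMod N, (h₂ x - h x).natAbs) < k := by omega
        have pe2 : ∀ x, Even (h₂ x - h x) := fun x => by
          simpa [neg_sub] using (t2 x).neg
        exact (IH _ hlt2 h h₂ s1 t1 pe2 rfl).trans t4

end Aux

/-- The alternating product of `f` over the extrema of a boundary path is
independent of the path. -/
theorem path_constant_independent {F : Type*} [OctSemifield F]
    (m n : ℕ) (hm : 0 < m) (hn : 0 < n)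
    (f : ZMod (2 * m + 2 * n) → ℤ → F)
    (hf : ∀ s t, f s (t + 1) * f s (t - 1) = f (s + 1) t * f (s - 1) t)
    (h h' : ZMod (2 * m + 2 * n) → ℤ)
    (hstep : ∀ s, h (s + 1) - h s = 1 ∨ h (s + 1) - h s = -1)
    (hstep' : ∀ s, h' (s + 1) - h' s = 1 ∨ h' (s + 1) - h' s = -1)
    (hpar : ∀ s, Even (h s - (s.val : ℤ)))
    (hpar' : ∀ s, Even (h' s - (s.val : ℤ))) :
    (∏ i ∈ Finset.range (2 * m + 2 * n),
        (if h ((i : ZMod (2 * m + 2 * n)) - 1) < h (i : ZMod (2 * m + 2 * n)) ∧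
            h ((i : ZMod (2 * m + 2 * n)) + 1) < h (i : ZMod (2 * m + 2 * n)) then
          f (i : ZMod (2 * m + 2 * n)) (h (i : ZMod (2 * m + 2 * n)))
        else if h (i : ZMod (2 * m + 2 * n)) < h ((i : ZMod (2 * m + 2 * n)) - 1) ∧
            h (i : ZMod (2 * m + 2 * n)) < h ((i : ZMod (2 * m + 2 * n)) + 1) then
          (f (i : ZMod (2 * m + 2 * n)) (h (i : ZMod (2 * m + 2 * n))))⁻¹
        else 1))
    = (∏ i ∈ Finset.range (2 * m + 2 * n),
        (if h' ((i : ZMod (2 * m + 2 * n)) - 1) < h' (i : ZMod (2 * m + 2 * n)) ∧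
            h' ((i : ZMod (2 * m + 2 * n)) + 1) < h' (i : ZMod (2 * m + 2 * n)) then
          f (i : ZMod (2 * m + 2 * n)) (h' (i : ZMod (2 * m + 2 * n)))
        else if h' (i : ZMod (2 * m + 2 * n)) < h' ((i : ZMod (2 * m + 2 * n)) - 1) ∧
            h' (i : ZMod (2 * m + 2 * n)) < h' ((i : ZMod (2 * m + 2 * n)) + 1) then
          (f (i : ZMod (2 * m + 2 * n)) (h' (i : ZMod (2 * m + 2 * n))))⁻¹
        else 1)) := by
  haveI : NeZero (2 * m + 2 * n) := ⟨by omega⟩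
  have pe : ∀ x : ZMod (2 * m + 2 * n), Even (h' x - h x) := fun x => by
    simpa [sub_sub_sub_cancel_right] using (hpar' x).sub (hpar x)
  show (∏ i ∈ Finset.range (2 * m + 2 * n), pg f h (i : ZMod (2 * m + 2 * n)))
      = ∏ i ∈ Finset.range (2 * m + 2 * n), pg f h' (i : ZMod (2 * m + 2 * n))
  rw [prod_range_zmod, prod_range_zmod]
  exact mainLemma (by omega) f hf _ h h' hstep hstep' pe rfl
end

section
/- Let F be a semifield and let f : (ℤ/N) × ℤ → F satisfy f(s, t+1)·f(s, t−1) = f(s+1, t)·f(s−1, t), where N = 2m + 2n. Then for every (s, t), f(s, t) = c · f(s + m + n, t − m − n), where c is the path-invariant constant of the recurrence. -/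
/-!
The recurrence says exactly that the ratio `R s t = f s (t + 1) / f (s + 1) t` (`diagRatio`) is
constant along ascending diagonals, so `R s t` depends only on `s - t`. Walking from `(s, t)` down
the diagonal for `K = m + n` steps telescopes `f s t` into `f (s + K) (t - K)` times the ratios at
the points `s - t + 2j + 1`, `j < K`. As `2K = 0` in `ℤ/(2K)`, these form a full period of a
`K`-periodic sequence, so their product `c` does not depend on `(s, t)` as long as `s - t` is even.
-/

open Finset

theorem Finset.prod_range_add_eq_of_periodic {M : Type*} [CancelCommMonoid M] {ψ : ℤ → M}
    {K : ℕ} (hψ : Function.Periodic ψ K) (a : ℤ) :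
    ∏ j ∈ range K, ψ (a + j) = ∏ j ∈ range K, ψ j := by
  have step : ∀ b : ℤ, ∏ j ∈ range K, ψ (b + 1 + j) = ∏ j ∈ range K, ψ (b + j) := by
    intro b
    apply mul_right_cancel (b := ψ b)
    calc (∏ j ∈ range K, ψ (b + 1 + j)) * ψ b
        = (∏ j ∈ range K, ψ (b + ↑(j + 1))) * ψ (b + ↑(0 : ℕ)) := by
          simp only [Nat.cast_succ, Nat.cast_zero, add_zero, add_assoc, add_comm (1 : ℤ)]
      _ = (∏ j ∈ range K, ψ (b + j)) * ψ (b + K) := by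
          rw [← prod_range_succ' (fun j : ℕ => ψ (b + j)), prod_range_succ]
      _ = (∏ j ∈ range K, ψ (b + j)) * ψ b := by rw [hψ]
  induction a using Int.induction_on with
  | zero => simp
  | succ b ih => rw [step, ih]
  | pred b ih => rw [← ih, ← step, sub_add_cancel]

theorem ZMod.exists_eq_intCast_add_two_mul {N : ℕ} (s : ZMod N) (t : ℤ)
    (h : Even ((s.val : ℤ) + t)) : ∃ a : ℤ, s = ((t + 2 * a : ℤ) : ZMod N) := by
  obtain ⟨r, hr⟩ := h
  rcases N with _ | N
  · -- `ZMod 0 = ℤ` and `val = natAbs`, so the sign of `s` matters.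
    change ℤ at s
    change (s.natAbs : ℤ) + t = r + r at hr
    rcases Int.natAbs_eq s with hs | hs
    · exact ⟨r - t, by change s = t + 2 * (r - t); omega⟩
    · exact ⟨-r, by change s = t + 2 * -r; omega⟩
  · refine ⟨r - t, ?_⟩
    rw [show t + 2 * (r - t) = (s.val : ℤ) by omega, Int.cast_natCast, ZMod.natCast_zmod_val]

section DiagonalRatio

variable {A G : Type*} [CommRing A] [CommGroup G] {f : A → ℤ → G}

def diagRatio (f : A → ℤ → G) (s : A) (t : ℤ) : G :=
  f s (t + 1) * (f (s + 1) t)⁻¹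

theorem diagRatio_add_one_add_one
    (hf : ∀ s t, f s (t + 1) * f s (t - 1) = f (s + 1) t * f (s - 1) t) (s : A) (t : ℤ) :
    diagRatio f (s + 1) (t + 1) = diagRatio f s t := by
  have h := hf (s + 1) (t + 1)
  rw [add_sub_cancel_right, add_sub_cancel_right] at h
  rw [diagRatio, diagRatio, ← div_eq_mul_inv, ← div_eq_mul_inv, div_eq_div_iff_mul_eq_mul, h,
    mul_comm]

theorem diagRatio_eq_diagRatio_sub_zero
    (hf : ∀ s t, f s (t + 1) * f s (t - 1) = f (s + 1) t * f (s - 1) t) (s : A) (t : ℤ) :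
    diagRatio f s t = diagRatio f (s - t) 0 := by
  induction t using Int.induction_on generalizing s with
  | zero => simp
  | succ t ih =>
    rw [← sub_add_cancel s 1, diagRatio_add_one_add_one hf, ih]
    push_cast; ring_nf
  | pred t ih =>
    rw [← diagRatio_add_one_add_one hf, sub_add_cancel, ih]
    push_cast; ring_nf

theorem eq_diagRatio_mul (s : A) (t : ℤ) : f s t = diagRatio f s (t - 1) * f (s + 1) (t - 1) := by
  rw [diagRatio, sub_add_cancel, inv_mul_cancel_right]

theorem eq_prod_diagRatio_mul
    (hf : ∀ s t, f s (t + 1) * f s (t - 1) = f (s + 1) t * f (s - 1) t) (s : A) (t : ℤ) (k : ℕ) :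
    f s t = (∏ j ∈ range k, diagRatio f (s - t + 2 * j + 1) 0) * f (s + k) (t - k) := by
  induction k with
  | zero => simp
  | succ k ih =>
    rw [ih, eq_diagRatio_mul (f := f) (s + k), diagRatio_eq_diagRatio_sub_zero hf, prod_range_succ,
      mul_assoc]
    push_cast
    ring_nf

end DiagonalRatio

theorem boundary_periodicity_general {F : Type*} [OctSemifield F]
    (m n : ℕ)
    (f : ZMod (2 * m + 2 * n) → ℤ → F)
    (hf : ∀ s t, f s (t + 1) * f s (t - 1) = f (s + 1) t * f (s - 1) t) :
    ∃ c : F, ∀ (s : ZMod (2 * m + 2 * n)) (t : ℤ), Even ((s.val : ℤ) + t) →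
      f s t = c * f (s + (m : ZMod (2 * m + 2 * n)) + (n : ZMod (2 * m + 2 * n)))
        (t - (m : ℤ) - (n : ℤ)) := by
  set ψ : ℤ → F := fun i => diagRatio f ((2 * i + 1 : ℤ) : ZMod (2 * m + 2 * n)) 0
  have hψ : Function.Periodic ψ ((m + n : ℕ) : ℤ) := fun i => by
    simp only [ψ]
    rw [show 2 * (i + (m + n : ℕ)) + 1 = 2 * i + 1 + ((2 * m + 2 * n : ℕ) : ℤ) by push_cast; ring,
      Int.cast_add, Int.cast_natCast, ZMod.natCast_self, add_zero]
  refine ⟨∏ j ∈ range (m + n), ψ j, fun s t hst => ?_⟩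
  obtain ⟨a, rfl⟩ := ZMod.exists_eq_intCast_add_two_mul s t hst
  rw [eq_prod_diagRatio_mul hf _ t (m + n), ← prod_range_add_eq_of_periodic hψ a]
  simp only [ψ]
  push_cast
  ring_nf

/-- Periodicity of the boundary recurrence on the cylinder ℤ/(2m+2n) × ℤ. -/
theorem boundary_periodicity {F : Type*} [OctSemifield F]
    (m n : ℕ) (hm : 0 < m) (hn : 0 < n)
    (f : ZMod (2 * m + 2 * n) → ℤ → F)
    (hf : ∀ s t, f s (t + 1) * f s (t - 1) = f (s + 1) t * f (s - 1) t) :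
    ∃ c : F, ∀ (s : ZMod (2 * m + 2 * n)) (t : ℤ), Even ((s.val : ℤ) + t) →
      f s t = c * f (s + (m : ZMod (2 * m + 2 * n)) + (n : ZMod (2 * m + 2 * n)))
        (t - (m : ℤ) - (n : ℤ)) :=
  boundary_periodicity_general m n f hf
end
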